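/- arXiv:2507.10523 — 8 statements merged into one kernel-verified Lean document; each statement's English description precedes it below -/
import Mathlib

section
/- Let h : [-1,1] → ℝ be twice continuously differentiable with h(-1) = h(1) = 0 and h'(-1) = h'(1) = 0 (clamped boundary conditions). Then sup_{x ∈ [-1,1]} |h(x)| ≤ (√2/2) · (∫_{-1}^{1} h''(t)² dt)^{1/2}. -/
/-!
Taylor's formula at an endpoint `a` where `h` and `h'` vanish gives
`h x = ∫ t in a..x, (x - t) * h'' t`, so by Cauchy–Schwarz `h x ^ 2 ≤ |x - a| ^ 3 / 3 * ∫ h'' ^ 2`.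
Using the endpoint nearer to `x` makes `|x - a| ≤ 1`, which even gives the constant `1 / √3 < √2 / 2`.
-/

open MeasureTheory Set Interval

theorem sq_integral_mul_le_integral_sq_mul_integral_sq {α : Type*} [MeasurableSpace α]
    {μ : Measure α} {u v : α → ℝ} (hu : Integrable (fun t ↦ u t ^ 2) μ)
    (hv : Integrable (fun t ↦ v t ^ 2) μ) (huv : Integrable (fun t ↦ u t * v t) μ) :
    (∫ t, u t * v t ∂μ) ^ 2 ≤ (∫ t, u t ^ 2 ∂μ) * ∫ t, v t ^ 2 ∂μ := by
  have hquad : ∀ s : ℝ,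
      0 ≤ (∫ t, u t ^ 2 ∂μ) * (s * s) + (2 * ∫ t, u t * v t ∂μ) * s + ∫ t, v t ^ 2 ∂μ := by
    intro s
    have hexp : ∀ t, (s * u t + v t) ^ 2 = s ^ 2 * u t ^ 2 + 2 * s * (u t * v t) + v t ^ 2 :=
      fun t ↦ by ring
    calc 0 ≤ ∫ t, (s * u t + v t) ^ 2 ∂μ := integral_nonneg fun t ↦ sq_nonneg _
      _ = _ := by
        simp_rw [hexp]
        rw [integral_add _ hv, integral_add (hu.const_mul _) (huv.const_mul _), integral_const_mul,
          integral_const_mul]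
        · ring
        · exact (hu.const_mul _).add (huv.const_mul _)
  have := discrim_le_zero hquad
  rw [discrim] at this
  linarith

theorem taylor_integral_remainder_deriv_deriv {h : ℝ → ℝ} (hh : ContDiff ℝ 2 h) (a x : ℝ) :
    h x = h a + (x - a) * deriv h a + ∫ t in a..x, (x - t) * deriv (deriv h) t := by
  have hh' : ContDiff ℝ 1 (deriv h) := hh.iterate_deriv' 1 1
  have hderiv : ∀ t, HasDerivAt (fun t ↦ h t + (x - t) * deriv h t)
      ((x - t) * deriv (deriv h) t) t := by
    intro t
    have : HasDerivAt (fun t ↦ h t + (x - t) * deriv h t)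
        (deriv h t + (-1 * deriv h t + (x - t) * deriv (deriv h) t)) t :=
      (hh.differentiable two_ne_zero t).hasDerivAt.add
        (((hasDerivAt_id t).const_sub x).mul (hh'.differentiable one_ne_zero t).hasDerivAt)
    exact this.congr_deriv (by ring)
  rw [intervalIntegral.integral_eq_sub_of_hasDerivAt (fun t _ ↦ hderiv t)
    (((continuous_const.sub continuous_id).mul (hh'.continuous_deriv le_rfl)).intervalIntegrable _ _)]
  ring

theorem sq_le_of_eq_zero_of_deriv_eq_zero {h : ℝ → ℝ} (hh : ContDiff ℝ 2 h) {a : ℝ}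
    (ha : h a = 0) (ha' : deriv h a = 0) (x : ℝ) :
    h x ^ 2 ≤ |x - a| ^ 3 / 3 * ∫ t in Ι a x, deriv (deriv h) t ^ 2 := by
  have hg : Continuous (deriv (deriv h)) := (hh.iterate_deriv' 1 1).continuous_deriv le_rfl
  have hp : Continuous fun t ↦ x - t := continuous_const.sub continuous_id
  have htaylor := taylor_integral_remainder_deriv_deriv hh a x
  rw [ha, ha', mul_zero, add_zero, zero_add] at htaylor
  have hweight : ∫ t in Ι a x, (x - t) ^ 2 = |x - a| ^ 3 / 3 := by
    rw [← abs_of_nonneg (setIntegral_nonneg measurableSet_uIoc fun t _ ↦ sq_nonneg (x - t)),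
      ← intervalIntegral.abs_integral_eq_abs_integral_uIoc,
      intervalIntegral.integral_comp_sub_left (fun t ↦ t ^ 2) x, integral_pow]
    norm_num [abs_div, abs_pow]
  calc h x ^ 2 = (∫ t in Ι a x, (x - t) * deriv (deriv h) t) ^ 2 := by
        rw [← sq_abs, htaylor, intervalIntegral.abs_integral_eq_abs_integral_uIoc, sq_abs]
    _ ≤ (∫ t in Ι a x, (x - t) ^ 2) * ∫ t in Ι a x, deriv (deriv h) t ^ 2 :=
        sq_integral_mul_le_integral_sq_mul_integral_sq ((hp.pow 2).integrableOn_uIoc)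
          ((hg.pow 2).integrableOn_uIoc) ((hp.mul hg).integrableOn_uIoc)
    _ = _ := by rw [hweight]

/-- Clamped embedding bound: for `h` twice continuously differentiable with
`h(±1) = 0` and `h'(±1) = 0`, one has `‖h‖_{L^∞(-1,1)} ≤ (√2/2) ‖h''‖_{L²(-1,1)}`. -/
theorem stmt_0 (h : ℝ → ℝ) (hreg : ContDiff ℝ 2 h)
    (hb1 : h (-1) = 0) (hb2 : h 1 = 0)
    (hb3 : deriv h (-1) = 0) (hb4 : deriv h 1 = 0) :
    ∀ x ∈ Set.Icc (-1 : ℝ) 1,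
      |h x| ≤ (Real.sqrt 2 / 2) *
        Real.sqrt (∫ t in (-1 : ℝ)..1, (deriv (deriv h) t) ^ 2) := by
  rintro x ⟨hx₁, hx₂⟩
  set I := ∫ t in (-1 : ℝ)..1, deriv (deriv h) t ^ 2 with hI_def
  obtain ⟨a, ha, ha', hxa, hsub⟩ :
      ∃ a, h a = 0 ∧ deriv h a = 0 ∧ |x - a| ≤ 1 ∧ Ι a x ⊆ Ioc (-1) 1 := by
    rcases le_total x 0 with hx0 | hx0
    · refine ⟨-1, hb1, hb3, abs_le.2 ⟨by linarith, by linarith⟩, ?_⟩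
      rw [uIoc_of_le hx₁]
      exact Ioc_subset_Ioc_right hx₂
    · refine ⟨1, hb2, hb4, abs_le.2 ⟨by linarith, by linarith⟩, ?_⟩
      rw [uIoc_of_ge hx₂]
      exact Ioc_subset_Ioc_left hx₁
  have hg : Continuous fun t ↦ deriv (deriv h) t ^ 2 :=
    ((hreg.iterate_deriv' 1 1).continuous_deriv le_rfl).pow 2
  have hI : ∫ t in Ι a x, deriv (deriv h) t ^ 2 ≤ I := by
    rw [hI_def, intervalIntegral.integral_of_le (by norm_num)]
    exact setIntegral_mono_set hg.integrableOn_Ioc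
      (Filter.Eventually.of_forall fun t ↦ sq_nonneg _) hsub.eventuallyLE
  have hsq : h x ^ 2 ≤ (√2 / 2 * √I) ^ 2 := calc
    h x ^ 2 ≤ |x - a| ^ 3 / 3 * ∫ t in Ι a x, deriv (deriv h) t ^ 2 :=
        sq_le_of_eq_zero_of_deriv_eq_zero hreg ha ha' x
    _ ≤ 1 / 3 * I := by
        gcongr
        exact pow_le_one₀ (abs_nonneg _) hxa
    _ ≤ (√2 / 2 * √I) ^ 2 := by
        have hI₀ : 0 ≤ I := intervalIntegral.integral_nonneg (by norm_num) fun t _ ↦ sq_nonneg _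
        rw [mul_pow, div_pow, Real.sq_sqrt zero_le_two, Real.sq_sqrt hI₀]
        linarith
  exact abs_le_of_sq_le_sq hsq (by positivity)
end

section
/- Let h : [-1,1] → ℝ be twice continuously differentiable with h(-1) = 0 and h'(-1) = h'(1) = 0. Then for every x ∈ [-1,1], 2|h(x)| ≤ (x+1) · ∫_{-1}^{1} |h''(s)| ds. -/
/-! Since `h'` vanishes at both ends, bounding `|h'(t)|` by `∫|h''|` over `[-1,t]` and over `[t,1]`
and adding gives `2|h'| ≤ ∫_{-1}^1 |h''|`; the mean value inequality from `h(-1) = 0` finishes. -/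

open Set intervalIntegral MeasureTheory

theorem abs_sub_le_integral_abs_of_hasDerivAt {f f' : ℝ → ℝ} {a b : ℝ} (hab : a ≤ b)
    (hf : ∀ x ∈ Icc a b, HasDerivAt f (f' x) x) (hf' : IntervalIntegrable f' volume a b) :
    |f b - f a| ≤ ∫ x in a..b, |f' x| := by
  rw [← integral_eq_sub_of_hasDerivAt (by rwa [uIcc_of_le hab]) hf']
  exact abs_integral_le_integral_abs hab

theorem two_mul_abs_le_integral_abs_deriv_of_eq_zero {f f' : ℝ → ℝ} {a b t : ℝ}
    (hf : ∀ x ∈ Icc a b, HasDerivAt f (f' x) x) (hf' : IntervalIntegrable f' volume a b)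
    (ha : f a = 0) (hb : f b = 0) (ht : t ∈ Icc a b) :
    2 * |f t| ≤ ∫ x in a..b, |f' x| := by
  have hf'_abs : IntervalIntegrable (fun x ↦ |f' x|) volume a b := hf'.abs
  have h_left : |f t| ≤ ∫ x in a..t, |f' x| := by
    simpa [ha] using abs_sub_le_integral_abs_of_hasDerivAt ht.1
      (fun x hx ↦ hf x ⟨hx.1, hx.2.trans ht.2⟩)
      (hf'.mono_set (by simp [uIcc_of_le, ht.1, ht.1.trans ht.2, Icc_subset_Icc_right ht.2]))
  have h_right : |f t| ≤ ∫ x in t..b, |f' x| := by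
    simpa [hb, abs_sub_comm] using abs_sub_le_integral_abs_of_hasDerivAt ht.2
      (fun x hx ↦ hf x ⟨ht.1.trans hx.1, hx.2⟩)
      (hf'.mono_set (by simp [uIcc_of_le, ht.2, ht.1.trans ht.2, Icc_subset_Icc_left ht.1]))
  rw [← integral_add_adjacent_intervals (hf'_abs.mono_set _) (hf'_abs.mono_set _)]
  · linarith
  all_goals simp [uIcc_of_le, ht.1, ht.2, ht.1.trans ht.2, Icc_subset_Icc_left, Icc_subset_Icc_right]

/-- Inequality (eq_10): if `h(-1) = 0` and `h'(±1) = 0`, then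
`2|h(x)| ≤ (x+1) ∫_{-1}^1 |h''(s)| ds` for every `x ∈ [-1,1]`. -/
theorem stmt_1 (h : ℝ → ℝ) (hreg : ContDiff ℝ 2 h)
    (hb1 : h (-1) = 0)
    (hb3 : deriv h (-1) = 0) (hb4 : deriv h 1 = 0) :
    ∀ x ∈ Set.Icc (-1 : ℝ) 1,
      2 * |h x| ≤ (x + 1) * ∫ s in (-1 : ℝ)..1, |deriv (deriv h) s| := by
  intro x hx
  set C := ∫ s in (-1 : ℝ)..1, |deriv (deriv h) s|
  have hreg' : ContDiff ℝ 1 (deriv h) := hreg.deriv'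
  have hd : Differentiable ℝ h := hreg.differentiable two_ne_zero
  have hd' : Differentiable ℝ (deriv h) := hreg'.differentiable one_ne_zero
  have h_deriv_bound : ∀ t ∈ Icc (-1 : ℝ) 1, 2 * |deriv h t| ≤ C :=
    fun t ht ↦ two_mul_abs_le_integral_abs_deriv_of_eq_zero (fun s _ ↦ (hd' s).hasDerivAt)
      ((hreg'.continuous_deriv le_rfl).intervalIntegrable _ _) hb3 hb4 ht
  have h_mvt := norm_image_sub_le_of_norm_deriv_le_segment' (C := C / 2)
    (fun t _ ↦ (hd t).hasDerivAt.hasDerivWithinAt)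
    (fun t ht ↦ by linarith [Real.norm_eq_abs (deriv h t), h_deriv_bound t (Ico_subset_Icc_self ht)]) x hx
  rw [hb1, sub_zero, Real.norm_eq_abs, sub_neg_eq_add] at h_mvt
  linarith
end

section
/- Let h : [-1,1] → ℝ be twice continuously differentiable with h(1) = 0 and h'(-1) = h'(1) = 0. Then for every x ∈ [-1,1], 2|h(x)| ≤ (1-x) · ∫_{-1}^{1} |h''(s)| ds. -/
/-- Inequality (eq_11): if `h(1) = 0` and `h'(±1) = 0`, then
`2|h(x)| ≤ (1-x) ∫_{-1}^1 |h''(s)| ds` for every `x ∈ [-1,1]`. -/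
theorem stmt_2 (h : ℝ → ℝ) (hreg : ContDiff ℝ 2 h)
    (hb2 : h 1 = 0)
    (hb3 : deriv h (-1) = 0) (hb4 : deriv h 1 = 0) :
    ∀ x ∈ Set.Icc (-1 : ℝ) 1,
      2 * |h x| ≤ (1 - x) * ∫ s in (-1 : ℝ)..1, |deriv (deriv h) s| := by
  have hd1 : Differentiable ℝ h := hreg.differentiable (by norm_num)
  have h2 : ContDiff ℝ 1 (deriv h) := by
    have := (contDiff_succ_iff_deriv (n := 1)).mp (by exact_mod_cast hreg)
    exact this.2.2
  have hd2 : Differentiable ℝ (deriv h) := h2.differentiable (by norm_num)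
  have hc2 : Continuous (deriv (deriv h)) := by
    have := (contDiff_succ_iff_deriv (n := 0)).mp (by exact_mod_cast h2)
    exact this.2.2.continuous
  have hc1 : Continuous (deriv h) := hd2.continuous
  set I : ℝ := ∫ s in (-1 : ℝ)..1, |deriv (deriv h) s| with hI
  -- FTC for deriv h on any interval
  have ftc2 : ∀ a b : ℝ, (∫ s in a..b, deriv (deriv h) s) = deriv h b - deriv h a := by
    intro a b
    exact intervalIntegral.integral_deriv_eq_sub (fun x _ => hd2 x)
      (hc2.intervalIntegrable a b)
  have ftc1 : ∀ a b : ℝ, (∫ s in a..b, deriv h s) = h b - h a := by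
    intro a b
    exact intervalIntegral.integral_deriv_eq_sub (fun x _ => hd1 x)
      (hc1.intervalIntegrable a b)
  -- key bound on |deriv h|
  have key : ∀ t ∈ Set.Icc (-1 : ℝ) 1, |deriv h t| ≤ I / 2 := by
    intro t ht
    have e1 : deriv h t = ∫ s in (-1 : ℝ)..t, deriv (deriv h) s := by
      rw [ftc2, hb3, sub_zero]
    have e2 : deriv h t = -∫ s in t..(1 : ℝ), deriv (deriv h) s := by
      rw [ftc2, hb4, zero_sub, neg_neg]
    have b1 : |deriv h t| ≤ ∫ s in (-1 : ℝ)..t, |deriv (deriv h) s| := by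
      rw [e1]
      exact intervalIntegral.abs_integral_le_integral_abs ht.1
    have b2 : |deriv h t| ≤ ∫ s in t..(1 : ℝ), |deriv (deriv h) s| := by
      rw [e2, abs_neg]
      exact intervalIntegral.abs_integral_le_integral_abs ht.2
    have hsplit : I = (∫ s in (-1 : ℝ)..t, |deriv (deriv h) s|) +
        ∫ s in t..(1 : ℝ), |deriv (deriv h) s| := by
      rw [hI, ← intervalIntegral.integral_add_adjacent_intervals
        ((hc2.abs.intervalIntegrable _ _)) ((hc2.abs.intervalIntegrable _ _))]
    linarith
  intro x hx
  have hx1 : x ≤ 1 := hx.2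
  have e3 : h x = -∫ s in x..(1 : ℝ), deriv h s := by
    rw [ftc1, hb2, zero_sub, neg_neg]
  have b3 : |h x| ≤ ∫ s in x..(1 : ℝ), |deriv h s| := by
    rw [e3, abs_neg]
    exact intervalIntegral.abs_integral_le_integral_abs hx1
  have b4 : (∫ s in x..(1 : ℝ), |deriv h s|) ≤ ∫ _s in x..(1 : ℝ), I / 2 := by
    apply intervalIntegral.integral_mono_on hx1
      (hc1.abs.intervalIntegrable _ _) (intervalIntegrable_const)
    intro s hs
    exact key s ⟨le_trans hx.1 hs.1, hs.2⟩
  have b5 : (∫ _s in x..(1 : ℝ), I / 2) = (1 - x) * (I / 2) := by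
    simp [smul_eq_mul]; ring
  linarith
end

section
/- Let h : [-1,1] → ℝ be twice continuously differentiable with h(-1) = h(1) = 0. Then sup_{x ∈ [-1,1]} |h(x)| ≤ (4√2/3) · (∫_{-1}^{1} h''(t)² dt)^{1/2}. -/
/-!
Rolle's theorem gives `c ∈ (a, b)` with `h'(c) = 0`, so Cauchy–Schwarz on `h'(t) = ∫_c^t h''`
gives `|h'(t)| ≤ √|t - c| ‖h''‖₂`. Integrating from the zero `h(a) = 0` then yields
`|h(x)| ≤ ‖h''‖₂ ∫_a^b √|t - c| dt ≤ (2/3) (b - a)^{3/2} ‖h''‖₂`,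
which is `4√2/3 ‖h''‖₂` on `[-1, 1]`.
-/

open MeasureTheory intervalIntegral Set

theorem integral_sqrt_of_nonneg {b : ℝ} (hb : 0 ≤ b) :
    ∫ x in (0 : ℝ)..b, √x = 2 / 3 * (b * √b) := by
  have hrpow : ∫ x in (0 : ℝ)..b, √x = ∫ x in (0 : ℝ)..b, x ^ (1 / 2 : ℝ) :=
    integral_congr fun x _ => Real.sqrt_eq_rpow x
  rw [hrpow, integral_rpow (by norm_num), Real.sqrt_eq_rpow,
    show (1 / 2 + 1 : ℝ) = 1 + 1 / 2 by norm_num, Real.rpow_add' hb (by norm_num),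
    Real.rpow_one, Real.zero_rpow (by norm_num)]
  ring

theorem integral_sqrt_abs_sub {a b c : ℝ} (hc : c ∈ Icc a b) :
    ∫ s in a..b, √|s - c| = 2 / 3 * ((c - a) * √(c - a) + (b - c) * √(b - c)) := by
  have hint : Continuous fun s => √|s - c| := by fun_prop
  rw [← integral_add_adjacent_intervals (hint.intervalIntegrable a c)
    (hint.intervalIntegrable c b)]
  have hleft : ∫ s in a..c, √|s - c| = ∫ s in a..c, √(c - s) :=
    integral_congr fun s hs => by
      rw [uIcc_of_le hc.1] at hs
      rw [abs_of_nonpos (by linarith [hs.2]), neg_sub]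
  have hright : ∫ s in c..b, √|s - c| = ∫ s in c..b, √(s - c) :=
    integral_congr fun s hs => by
      rw [uIcc_of_le hc.2] at hs
      rw [abs_of_nonneg (by linarith [hs.1])]
  rw [hleft, hright, integral_comp_sub_left (fun x => √x),
    integral_comp_sub_right (fun x => √x),
    sub_self, integral_sqrt_of_nonneg (by linarith [hc.1]),
    integral_sqrt_of_nonneg (by linarith [hc.2])]
  ring

theorem integral_sqrt_abs_sub_le {a b c : ℝ} (hc : c ∈ Icc a b) :
    ∫ s in a..b, √|s - c| ≤ 2 / 3 * ((b - a) * √(b - a)) := by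
  rw [integral_sqrt_abs_sub hc]
  have hca : √(c - a) ≤ √(b - a) := Real.sqrt_le_sqrt (by linarith [hc.2])
  have hbc : √(b - c) ≤ √(b - a) := Real.sqrt_le_sqrt (by linarith [hc.1])
  have := mul_le_mul_of_nonneg_left hca (sub_nonneg.2 hc.1)
  have := mul_le_mul_of_nonneg_left hbc (sub_nonneg.2 hc.2)
  nlinarith

theorem sq_integral_le_mul_integral_sq {f : ℝ → ℝ} {a b : ℝ} (hab : a ≤ b)
    (hf : IntervalIntegrable f volume a b)
    (hf2 : IntervalIntegrable (fun t => f t ^ 2) volume a b) :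
    (∫ t in a..b, f t) ^ 2 ≤ (b - a) * ∫ t in a..b, f t ^ 2 := by
  set m := ∫ t in a..b, f t
  -- Expand `0 ≤ ∫ ((b - a) f - m)²`, the variance of `f` up to scaling.
  have hvar : 0 ≤ ∫ t in a..b, ((b - a) * f t - m) ^ 2 :=
    integral_nonneg hab fun t _ => sq_nonneg _
  have hexpand : ∫ t in a..b, ((b - a) * f t - m) ^ 2
      = (b - a) * ((b - a) * (∫ t in a..b, f t ^ 2) - m ^ 2) := by
    have hpt : (fun t => ((b - a) * f t - m) ^ 2)
        = fun t => (b - a) ^ 2 * f t ^ 2 - 2 * (b - a) * m * f t + m ^ 2 := by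
      funext t; ring
    rw [hpt, intervalIntegral.integral_add ((hf2.const_mul _).sub (hf.const_mul _))
        intervalIntegrable_const,
      intervalIntegral.integral_sub (hf2.const_mul _) (hf.const_mul _),
      intervalIntegral.integral_const_mul, intervalIntegral.integral_const_mul,
      intervalIntegral.integral_const, smul_eq_mul]
    ring
  rcases hab.eq_or_lt with rfl | hlt
  · simp [m]
  · rw [hexpand] at hvar
    nlinarith [(mul_nonneg_iff_of_pos_left (sub_pos.2 hlt)).1 hvar]

theorem sq_integral_le_mul_integral_sq_of_mem_Icc {f : ℝ → ℝ} {a b u v : ℝ}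
    (hf : Continuous f) (hu : u ∈ Icc a b) (hv : v ∈ Icc a b) :
    (∫ t in u..v, f t) ^ 2 ≤ |v - u| * ∫ t in a..b, f t ^ 2 := by
  wlog huv : u ≤ v generalizing u v
  · rw [integral_symm, neg_sq, abs_sub_comm]
    exact this hv hu (le_of_not_ge huv)
  have hf2 : Continuous fun t => f t ^ 2 := hf.pow 2
  calc (∫ t in u..v, f t) ^ 2 ≤ (v - u) * ∫ t in u..v, f t ^ 2 :=
        sq_integral_le_mul_integral_sq huv (hf.intervalIntegrable u v) (hf2.intervalIntegrable u v)
    _ ≤ |v - u| * ∫ t in a..b, f t ^ 2 := by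
        rw [abs_of_nonneg (sub_nonneg.2 huv)]
        gcongr
        exact integral_mono_interval hu.1 huv hv.2
            (Filter.Eventually.of_forall fun t => sq_nonneg _) (hf2.intervalIntegrable a b)

theorem abs_le_sqrt_abs_sub_mul_sqrt_integral_deriv_sq {g : ℝ → ℝ} (hg : ContDiff ℝ 1 g)
    {a b c s : ℝ} (hc : c ∈ Icc a b) (hs : s ∈ Icc a b) (hgc : g c = 0) :
    |g s| ≤ √|s - c| * √(∫ t in a..b, deriv g t ^ 2) := by
  have hftc : ∫ t in c..s, deriv g t = g s := by
    rw [integral_deriv_eq_sub (fun t _ => hg.differentiable_one t)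
      (hg.continuous_deriv_one.intervalIntegrable c s), hgc, sub_zero]
  rw [← Real.sqrt_mul (abs_nonneg _), ← hftc]
  exact Real.abs_le_sqrt (sq_integral_le_mul_integral_sq_of_mem_Icc hg.continuous_deriv_one hc hs)

theorem abs_le_integral_abs_deriv {h : ℝ → ℝ} (hh : ContDiff ℝ 1 h) {a b x : ℝ}
    (ha : h a = 0) (hx : x ∈ Icc a b) :
    |h x| ≤ ∫ t in a..b, |deriv h t| := by
  have hcont : Continuous fun t => |deriv h t| := hh.continuous_deriv_one.abs
  calc |h x| = |∫ t in a..x, deriv h t| := by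
        rw [integral_deriv_eq_sub (fun t _ => hh.differentiable_one t)
          (hh.continuous_deriv_one.intervalIntegrable a x), ha, sub_zero]
    _ ≤ ∫ t in a..x, |deriv h t| := abs_integral_le_integral_abs hx.1
    _ ≤ ∫ t in a..b, |deriv h t| :=
        integral_mono_interval le_rfl hx.1 hx.2
          (Filter.Eventually.of_forall fun t => abs_nonneg _) (hcont.intervalIntegrable a b)

theorem abs_le_mul_sqrt_integral_deriv_deriv_sq {h : ℝ → ℝ} (hh : ContDiff ℝ 2 h)
    {a b x : ℝ} (ha : h a = 0) (hb : h b = 0) (hx : x ∈ Icc a b) :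
    |h x| ≤ 2 / 3 * ((b - a) * √(b - a)) * √(∫ t in a..b, deriv (deriv h) t ^ 2) := by
  obtain rfl | hab := (hx.1.trans hx.2).eq_or_lt
  · simp [le_antisymm hx.2 hx.1, ha]
  obtain ⟨c, hcIoo, hc0⟩ :=
    exists_deriv_eq_zero hab hh.continuous.continuousOn (ha.trans hb.symm)
  have hc : c ∈ Icc a b := Ioo_subset_Icc_self hcIoo
  have hh' : ContDiff ℝ 1 (deriv h) := hh.deriv'
  set I := ∫ t in a..b, deriv (deriv h) t ^ 2
  calc |h x| ≤ ∫ t in a..b, |deriv h t| := abs_le_integral_abs_deriv (hh.of_le one_le_two) ha hx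
    _ ≤ ∫ t in a..b, √|t - c| * √I :=
        integral_mono_on hab.le (hh'.continuous.abs.intervalIntegrable a b)
          ((by fun_prop : Continuous fun t => √|t - c| * √I).intervalIntegrable a b)
          fun t ht => abs_le_sqrt_abs_sub_mul_sqrt_integral_deriv_sq hh' hc ht hc0
    _ = (∫ t in a..b, √|t - c|) * √I := integral_mul_const _ _
    _ ≤ 2 / 3 * ((b - a) * √(b - a)) * √I := by gcongr; exact integral_sqrt_abs_sub_le hc

/-- Hinged embedding bound: for `h` twice continuously differentiable with
`h(±1) = 0`, one has `‖h‖_{L^∞(-1,1)} ≤ (4√2/3) ‖h''‖_{L²(-1,1)}`. -/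
theorem stmt_4 (h : ℝ → ℝ) (hreg : ContDiff ℝ 2 h)
    (hb1 : h (-1) = 0) (hb2 : h 1 = 0) :
    ∀ x ∈ Set.Icc (-1 : ℝ) 1,
      |h x| ≤ (4 * Real.sqrt 2 / 3) *
        Real.sqrt (∫ t in (-1 : ℝ)..1, (deriv (deriv h) t) ^ 2) := by
  intro x hx
  convert abs_le_mul_sqrt_integral_deriv_deriv_sq hreg hb1 hb2 hx using 2
  norm_num
  ring
end

section
/- Let h : [-1,1] → ℝ be four times continuously differentiable with h(-1) = h(1) = 0 and h'(-1) = h'(1) = 0 (clamped boundary conditions). Then (∫_{-1}^{1} h''(y)² dy)^{1/2} ≤ (∫_{-1}^{1} h''''(y)² dy)^{1/2}. -/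
open intervalIntegral MeasureTheory

/-- Cauchy–Schwarz for interval integrals of continuous functions. -/
lemma cs_aux (f g : ℝ → ℝ) (hf : Continuous f) (hg : Continuous g) (a b : ℝ) (hab : a ≤ b) :
    (∫ x in a..b, f x * g x) ^ 2 ≤ (∫ x in a..b, f x ^ 2) * (∫ x in a..b, g x ^ 2) := by
  set F := ∫ x in a..b, f x ^ 2 with hFdef
  set G := ∫ x in a..b, g x ^ 2 with hGdef
  set P := ∫ x in a..b, f x * g x with hPdef
  have hF : 0 ≤ F := intervalIntegral.integral_nonneg hab (fun x _ => sq_nonneg _)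
  have hG : 0 ≤ G := intervalIntegral.integral_nonneg hab (fun x _ => sq_nonneg _)
  have quad : ∀ t : ℝ, 0 ≤ F + 2 * t * P + t ^ 2 * G := by
    intro t
    have h0 : 0 ≤ ∫ x in a..b, (f x + t * g x) ^ 2 :=
      intervalIntegral.integral_nonneg hab (fun x _ => sq_nonneg _)
    have i1 : IntervalIntegrable (fun x => f x ^ 2) volume a b :=
      (hf.pow 2).intervalIntegrable a b
    have i2 : IntervalIntegrable (fun x => 2 * t * (f x * g x)) volume a b :=
      (continuous_const.mul (hf.mul hg)).intervalIntegrable a b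
    have i3 : IntervalIntegrable (fun x => t ^ 2 * g x ^ 2) volume a b :=
      (continuous_const.mul (hg.pow 2)).intervalIntegrable a b
    have e : (∫ x in a..b, (f x + t * g x) ^ 2)
        = F + 2 * t * P + t ^ 2 * G := by
      have e1 : (fun x => (f x + t * g x) ^ 2)
          = fun x => f x ^ 2 + 2 * t * (f x * g x) + t ^ 2 * g x ^ 2 := by
        funext x; ring
      rw [e1, intervalIntegral.integral_add (i1.add i2) i3,
        intervalIntegral.integral_add i1 i2,
        intervalIntegral.integral_const_mul, intervalIntegral.integral_const_mul]
    linarith [e ▸ h0]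
  rcases eq_or_lt_of_le hG with hG0 | hGpos
  · by_cases hP : P = 0
    · rw [hP]; simpa using mul_nonneg hF hG
    · exfalso
      have hq := quad (-(F + 1) / (2 * P))
      have h2 : 2 * (-(F + 1) / (2 * P)) * P = -(F + 1) := by field_simp
      rw [h2, ← hG0, mul_zero, add_zero] at hq
      linarith
  · have hq := quad (-P / G)
    have key : F + 2 * (-P / G) * P + (-P / G) ^ 2 * G = F - P ^ 2 / G := by
      field_simp; ring
    rw [key] at hq
    have : P ^ 2 / G ≤ F := by linarith
    calc P ^ 2 = P ^ 2 / G * G := by field_simp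
    _ ≤ F * G := mul_le_mul_of_nonneg_right this (le_of_lt hGpos)

/-- Poincaré inequality on [-1,1] with zero boundary values (constant 1). -/
lemma poincare_aux (f f' : ℝ → ℝ) (hd : ∀ x, HasDerivAt f (f' x) x)
    (hc' : Continuous f') (h1 : f (-1) = 0) (h2 : f 1 = 0) :
    (∫ x in (-1:ℝ)..1, f x ^ 2) ≤ ∫ x in (-1:ℝ)..1, f' x ^ 2 := by
  have hc : Continuous f := by
    rw [continuous_iff_continuousAt]; exact fun x => (hd x).continuousAt
  set K := ∫ x in (-1:ℝ)..1, f' x ^ 2 with hK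
  have hK0 : 0 ≤ K := intervalIntegral.integral_nonneg (by norm_num) fun x _ => sq_nonneg _
  have hi' : ∀ a b : ℝ, IntervalIntegrable f' volume a b := fun a b => hc'.intervalIntegrable a b
  have ftcL : ∀ x : ℝ, f x = ∫ t in (-1:ℝ)..x, f' t := by
    intro x
    rw [intervalIntegral.integral_eq_sub_of_hasDerivAt (fun t _ => hd t) (hi' _ _), h1, sub_zero]
  have ftcR : ∀ x : ℝ, f x = -∫ t in x..(1:ℝ), f' t := by
    intro x
    rw [intervalIntegral.integral_eq_sub_of_hasDerivAt (fun t _ => hd t) (hi' _ _), h2]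
    ring
  have subK : ∀ a b : ℝ, -1 ≤ a → a ≤ b → b ≤ 1 → (∫ t in a..b, f' t ^ 2) ≤ K := by
    intro a b ha hab hb
    exact intervalIntegral.integral_mono_interval ha hab hb
      (Filter.Eventually.of_forall fun x => sq_nonneg _)
      ((hc'.pow 2).intervalIntegrable _ _)
  have pwL : ∀ x : ℝ, -1 ≤ x → x ≤ 1 → f x ^ 2 ≤ (x + 1) * K := by
    intro x hx1 hx2
    have cs := cs_aux f' (fun _ => (1:ℝ)) hc' continuous_const (-1) x hx1
    simp only [mul_one, one_pow] at cs
    have e1 : (∫ t in (-1:ℝ)..x, (1:ℝ)) = x + 1 := by simp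
    rw [e1] at cs
    calc f x ^ 2 = (∫ t in (-1:ℝ)..x, f' t) ^ 2 := by rw [← ftcL]
    _ ≤ (∫ t in (-1:ℝ)..x, f' t ^ 2) * (x + 1) := cs
    _ ≤ K * (x + 1) := mul_le_mul_of_nonneg_right (subK _ _ le_rfl hx1 hx2) (by linarith)
    _ = (x + 1) * K := by ring
  have pwR : ∀ x : ℝ, -1 ≤ x → x ≤ 1 → f x ^ 2 ≤ (1 - x) * K := by
    intro x hx1 hx2
    have cs := cs_aux f' (fun _ => (1:ℝ)) hc' continuous_const x 1 hx2
    simp only [mul_one, one_pow] at cs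
    have e1 : (∫ t in x..(1:ℝ), (1:ℝ)) = 1 - x := by simp
    rw [e1] at cs
    calc f x ^ 2 = (∫ t in x..(1:ℝ), f' t) ^ 2 := by rw [ftcR x]; ring
    _ ≤ (∫ t in x..(1:ℝ), f' t ^ 2) * (1 - x) := cs
    _ ≤ K * (1 - x) := mul_le_mul_of_nonneg_right (subK _ _ hx1 hx2 le_rfl) (by linarith)
    _ = (1 - x) * K := by ring
  have iF : Continuous fun x => f x ^ 2 := hc.pow 2
  have split : (∫ x in (-1:ℝ)..1, f x ^ 2)
      = (∫ x in (-1:ℝ)..0, f x ^ 2) + ∫ x in (0:ℝ)..1, f x ^ 2 :=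
    (intervalIntegral.integral_add_adjacent_intervals
      (iF.intervalIntegrable _ _) (iF.intervalIntegrable _ _)).symm
  have bL : (∫ x in (-1:ℝ)..0, f x ^ 2) ≤ ∫ x in (-1:ℝ)..0, (x + 1) * K :=
    intervalIntegral.integral_mono_on (by norm_num) (iF.intervalIntegrable _ _)
      (((continuous_id.add continuous_const).mul continuous_const).intervalIntegrable _ _)
      (fun x hx => pwL x hx.1 (by linarith [hx.2]))
  have bR : (∫ x in (0:ℝ)..1, f x ^ 2) ≤ ∫ x in (0:ℝ)..1, (1 - x) * K :=
    intervalIntegral.integral_mono_on (by norm_num) (iF.intervalIntegrable _ _)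
      (((continuous_const.sub continuous_id).mul continuous_const).intervalIntegrable _ _)
      (fun x hx => pwR x (by linarith [hx.1]) hx.2)
  have cL : (∫ x in (-1:ℝ)..0, (x + 1) * K) = K / 2 := by
    rw [intervalIntegral.integral_mul_const,
      intervalIntegral.integral_add intervalIntegral.intervalIntegrable_id
        intervalIntegrable_const,
      integral_id]
    simp; ring
  have cR : (∫ x in (0:ℝ)..1, (1 - x) * K) = K / 2 := by
    rw [intervalIntegral.integral_mul_const,
      intervalIntegral.integral_sub intervalIntegrable_const
        intervalIntegral.intervalIntegrable_id,
      integral_id]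
    simp; ring
  rw [split]
  linarith [bL, bR, cL ▸ bL, cR ▸ bR]

/-- Clamped second-derivative bound: `‖h''‖_{L²(-1,1)} ≤ ‖h''''‖_{L²(-1,1)}`. -/
theorem stmt_8 (h : ℝ → ℝ) (hreg : ContDiff ℝ 4 h)
    (hb1 : h (-1) = 0) (hb2 : h 1 = 0)
    (hb3 : deriv h (-1) = 0) (hb4 : deriv h 1 = 0) :
    Real.sqrt (∫ y in (-1 : ℝ)..1, (deriv (deriv h) y) ^ 2)
      ≤ Real.sqrt (∫ y in (-1 : ℝ)..1, (deriv (deriv (deriv (deriv h))) y) ^ 2) := by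
  -- regularity bookkeeping
  have hreg4 : ContDiff ℝ (3+1) h := by norm_num; exact hreg
  have hd0 : Differentiable ℝ h := (contDiff_succ_iff_deriv.mp hreg4).1
  have hreg3 : ContDiff ℝ (2+1) (deriv h) := by
    have := (contDiff_succ_iff_deriv.mp hreg4).2.2; norm_num at this ⊢; exact this
  have hd1 : Differentiable ℝ (deriv h) := (contDiff_succ_iff_deriv.mp hreg3).1
  have hreg2 : ContDiff ℝ (1+1) (deriv (deriv h)) := by
    have := (contDiff_succ_iff_deriv.mp hreg3).2.2; norm_num at this ⊢; exact this
  have hd2 : Differentiable ℝ (deriv (deriv h)) := (contDiff_succ_iff_deriv.mp hreg2).1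
  have hreg1 : ContDiff ℝ (0+1) (deriv (deriv (deriv h))) := by
    have := (contDiff_succ_iff_deriv.mp hreg2).2.2; norm_num at this ⊢; exact this
  have hd3 : Differentiable ℝ (deriv (deriv (deriv h))) := (contDiff_succ_iff_deriv.mp hreg1).1
  have hc4 : Continuous (deriv (deriv (deriv (deriv h)))) :=
    ((contDiff_succ_iff_deriv.mp hreg1).2.2).continuous
  have hc3 : Continuous (deriv (deriv (deriv h))) := hd3.continuous
  have hc2 : Continuous (deriv (deriv h)) := hd2.continuous
  have hc1 : Continuous (deriv h) := hd1.continuous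
  have hc0 : Continuous h := hd0.continuous
  have D0 : ∀ x, HasDerivAt h (deriv h x) x := fun x => (hd0 x).hasDerivAt
  have D1 : ∀ x, HasDerivAt (deriv h) (deriv (deriv h) x) x := fun x => (hd1 x).hasDerivAt
  have D2 : ∀ x, HasDerivAt (deriv (deriv h)) (deriv (deriv (deriv h)) x) x :=
    fun x => (hd2 x).hasDerivAt
  have D3 : ∀ x, HasDerivAt (deriv (deriv (deriv h))) (deriv (deriv (deriv (deriv h))) x) x :=
    fun x => (hd3 x).hasDerivAt
  set A := ∫ y in (-1:ℝ)..1, (deriv (deriv h) y) ^ 2 with hA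
  set B := ∫ y in (-1:ℝ)..1, (deriv (deriv (deriv (deriv h))) y) ^ 2 with hB
  have hA0 : 0 ≤ A := intervalIntegral.integral_nonneg (by norm_num) fun x _ => sq_nonneg _
  have hB0 : 0 ≤ B := intervalIntegral.integral_nonneg (by norm_num) fun x _ => sq_nonneg _
  -- integration by parts, twice
  have ibp1 : (∫ y in (-1:ℝ)..1, deriv (deriv h) y * deriv (deriv h) y)
      = -(∫ y in (-1:ℝ)..1, deriv (deriv (deriv h)) y * deriv h y) := by
    rw [intervalIntegral.integral_mul_deriv_eq_deriv_mul
      (u := deriv (deriv h)) (u' := deriv (deriv (deriv h)))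
      (v := deriv h) (v' := deriv (deriv h))
      (fun x _ => D2 x) (fun x _ => D1 x)
      (hc3.intervalIntegrable _ _) (hc2.intervalIntegrable _ _), hb3, hb4]
    ring
  have ibp2 : (∫ y in (-1:ℝ)..1, deriv (deriv (deriv h)) y * deriv h y)
      = -(∫ y in (-1:ℝ)..1, deriv (deriv (deriv (deriv h))) y * h y) := by
    rw [intervalIntegral.integral_mul_deriv_eq_deriv_mul
      (u := deriv (deriv (deriv h))) (u' := deriv (deriv (deriv (deriv h))))
      (v := h) (v' := deriv h)
      (fun x _ => D3 x) (fun x _ => D0 x)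
      (hc4.intervalIntegrable _ _) (hc1.intervalIntegrable _ _), hb1, hb2]
    ring
  have eqA : A = ∫ y in (-1:ℝ)..1, deriv (deriv (deriv (deriv h))) y * h y := by
    have : A = ∫ y in (-1:ℝ)..1, deriv (deriv h) y * deriv (deriv h) y := by
      rw [hA]; congr 1; funext y; ring
    rw [this, ibp1, ibp2]; ring
  -- Cauchy–Schwarz
  have cs : (∫ y in (-1:ℝ)..1, deriv (deriv (deriv (deriv h))) y * h y) ^ 2
      ≤ B * ∫ y in (-1:ℝ)..1, h y ^ 2 :=
    cs_aux _ h hc4 hc0 (-1) 1 (by norm_num)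
  -- Poincaré, twice
  have p1 : (∫ y in (-1:ℝ)..1, h y ^ 2) ≤ ∫ y in (-1:ℝ)..1, (deriv h y) ^ 2 :=
    poincare_aux h (deriv h) D0 hc1 hb1 hb2
  have p2 : (∫ y in (-1:ℝ)..1, (deriv h y) ^ 2) ≤ A :=
    poincare_aux (deriv h) (deriv (deriv h)) D1 hc2 hb3 hb4
  have hCA : (∫ y in (-1:ℝ)..1, h y ^ 2) ≤ A := le_trans p1 p2
  have key : A ^ 2 ≤ B * A := by
    calc A ^ 2 = (∫ y in (-1:ℝ)..1, deriv (deriv (deriv (deriv h))) y * h y) ^ 2 := by rw [eqA]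
    _ ≤ B * ∫ y in (-1:ℝ)..1, h y ^ 2 := cs
    _ ≤ B * A := mul_le_mul_of_nonneg_left hCA hB0
  apply Real.sqrt_le_sqrt
  rcases eq_or_lt_of_le hA0 with h0 | hpos
  · linarith
  · nlinarith
end

section
/- Let f : ℝ → ℝ be monotone nondecreasing with f(0) = 0, let g : [-1,1] → ℝ be continuous, and let h : [-1,1] → ℝ be four times continuously differentiable with h(-1) = h(1) = 0 and h'(-1) = h'(1) = 0 (clamped boundary conditions), satisfying the beam equation h''''(y) + f(h(y)) = g(y) for all y ∈ [-1,1]. Then (∫_{-1}^{1} h''(y)² dy)^{1/2} ≤ √2 · sup_{y ∈ [-1,1]} |g(y)|. -/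
/-!
Multiplying the equation by `h` and integrating by parts twice (the clamped boundary terms
vanish) gives `∫ (h'')² = ∫ h g - ∫ h f(h) ≤ ‖g‖_∞ ∫ |h|`, because `h f(h) ≥ 0`. In the other
direction, Taylor's formula at the nearer endpoint, `h y = ∫_a^y (y - t) h''(t) dt`, and
Cauchy–Schwarz give `h(y)² ≤ ∫ (h'')² / 3` on `[-1, 1]`, hence `∫ |h| ≤ 2 √(∫ (h'')² / 3)`.
Together, `∫ (h'')² ≤ (4/3) ‖g‖²_∞ ≤ 2 ‖g‖²_∞`.
-/

open intervalIntegral Set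

theorem sq_intervalIntegral_mul_le {u v : ℝ → ℝ} (hu : Continuous u) (hv : Continuous v)
    (a b : ℝ) :
    (∫ t in a..b, u t * v t) ^ 2 ≤ (∫ t in a..b, u t ^ 2) * ∫ t in a..b, v t ^ 2 := by
  wlog hab : a ≤ b generalizing a b
  · simpa only [integral_symm a b, neg_sq, neg_mul_neg] using this b a (le_of_not_ge hab)
  have hquad : ∀ x : ℝ, 0 ≤ (∫ t in a..b, u t ^ 2) * (x * x)
      + (2 * ∫ t in a..b, u t * v t) * x + ∫ t in a..b, v t ^ 2 := by
    intro x
    have hexpand : ∀ t, (x * u t + v t) ^ 2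
        = x * x * u t ^ 2 + 2 * x * (u t * v t) + v t ^ 2 := fun t => by ring
    calc 0 ≤ ∫ t in a..b, (x * u t + v t) ^ 2 := integral_nonneg hab fun t _ => sq_nonneg _
      _ = _ := by
        simp_rw [hexpand]
        rw [integral_add, integral_add, integral_const_mul, integral_const_mul]
        · ring
        all_goals exact Continuous.intervalIntegrable (by fun_prop) a b
  have hdiscr := discrim_le_zero hquad
  rw [discrim] at hdiscr
  nlinarith

theorem integral_sub_sq (a y : ℝ) : ∫ t in a..y, (y - t) ^ 2 = (y - a) ^ 3 / 3 := by
  rw [integral_comp_sub_left (fun x => x ^ 2), integral_pow]; ring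

theorem eq_integral_sub_mul_deriv_deriv {h : ℝ → ℝ} (hh : ContDiff ℝ 2 h) {a : ℝ}
    (ha : h a = 0) (ha' : deriv h a = 0) (y : ℝ) :
    h y = ∫ t in a..y, (y - t) * deriv (deriv h) t := by
  have hibp := integral_mul_deriv_eq_deriv_mul (a := a) (b := y)
    (fun t _ => (hasDerivAt_id t).const_sub y)
    (fun t _ => (hh.deriv'.differentiable one_ne_zero t).hasDerivAt)
    intervalIntegrable_const (hh.deriv'.continuous_deriv le_rfl |>.intervalIntegrable a y)
  have hftc : ∫ t in a..y, deriv h t = h y - h a :=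
    integral_deriv_eq_sub (fun t _ => hh.differentiable (by norm_num) t)
      (hh.continuous_deriv (by norm_num) |>.intervalIntegrable a y)
  simp only [id, neg_one_mul, intervalIntegral.integral_neg, hftc, ha, ha', sub_self] at hibp
  linarith

theorem sq_le_mul_integral_sq_deriv_deriv {h : ℝ → ℝ} (hh : ContDiff ℝ 2 h) {a : ℝ}
    (ha : h a = 0) (ha' : deriv h a = 0) (y : ℝ) :
    h y ^ 2 ≤ (y - a) ^ 3 / 3 * ∫ t in a..y, deriv (deriv h) t ^ 2 := by
  calc h y ^ 2 = (∫ t in a..y, (y - t) * deriv (deriv h) t) ^ 2 := by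
        rw [← eq_integral_sub_mul_deriv_deriv hh ha ha']
    _ ≤ (∫ t in a..y, (y - t) ^ 2) * ∫ t in a..y, deriv (deriv h) t ^ 2 :=
        sq_intervalIntegral_mul_le (by fun_prop) (hh.deriv'.continuous_deriv le_rfl) a y
    _ = _ := by rw [integral_sub_sq]

-- Expand at the nearer endpoint, at distance at most `(b - a) / 2`.
theorem sq_le_integral_sq_deriv_deriv_of_clamped {h : ℝ → ℝ} (hh : ContDiff ℝ 2 h) {a b : ℝ}
    (ha : h a = 0) (hb : h b = 0) (ha' : deriv h a = 0) (hb' : deriv h b = 0)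
    {y : ℝ} (hy : y ∈ Icc a b) :
    h y ^ 2 ≤ (b - a) ^ 3 / 24 * ∫ t in a..b, deriv (deriv h) t ^ 2 := by
  have hsub : ∀ {c d}, a ≤ c → c ≤ d → d ≤ b → 0 ≤ ∫ t in c..d, deriv (deriv h) t ^ 2 ∧
      ∫ t in c..d, deriv (deriv h) t ^ 2 ≤ ∫ t in a..b, deriv (deriv h) t ^ 2 := fun hac hcd hdb =>
    ⟨integral_nonneg hcd fun _ _ => sq_nonneg _,
      integral_mono_interval hac hcd hdb (Filter.Eventually.of_forall fun _ => sq_nonneg _)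
        ((hh.deriv'.continuous_deriv le_rfl).pow 2 |>.intervalIntegrable a b)⟩
  have hC : 0 ≤ (b - a) ^ 3 / 24 :=
    div_nonneg (pow_nonneg (sub_nonneg.2 (hy.1.trans hy.2)) 3) (by norm_num)
  rcases le_total y ((a + b) / 2) with hmid | hmid
  · obtain ⟨h0, hle⟩ := hsub le_rfl hy.1 hy.2
    have hpow : (y - a) ^ 3 ≤ ((b - a) / 2) ^ 3 :=
      pow_le_pow_left₀ (by linarith [hy.1]) (by linarith) 3
    calc h y ^ 2 ≤ (y - a) ^ 3 / 3 * ∫ t in a..y, deriv (deriv h) t ^ 2 :=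
          sq_le_mul_integral_sq_deriv_deriv hh ha ha' y
      _ ≤ (b - a) ^ 3 / 24 * ∫ t in a..b, deriv (deriv h) t ^ 2 :=
          mul_le_mul (by linarith) hle h0 hC
  · obtain ⟨h0, hle⟩ := hsub hy.1 hy.2 le_rfl
    have hpow : (b - y) ^ 3 ≤ ((b - a) / 2) ^ 3 :=
      pow_le_pow_left₀ (by linarith [hy.2]) (by linarith) 3
    calc h y ^ 2 ≤ (y - b) ^ 3 / 3 * ∫ t in b..y, deriv (deriv h) t ^ 2 :=
          sq_le_mul_integral_sq_deriv_deriv hh hb hb' y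
      _ = (b - y) ^ 3 / 3 * ∫ t in y..b, deriv (deriv h) t ^ 2 := by rw [integral_symm]; ring
      _ ≤ (b - a) ^ 3 / 24 * ∫ t in a..b, deriv (deriv h) t ^ 2 :=
          mul_le_mul (by linarith) hle h0 hC

theorem integral_mul_deriv4_eq_integral_sq_deriv_deriv {h : ℝ → ℝ} (hh : ContDiff ℝ 4 h)
    {a b : ℝ} (ha : h a = 0) (hb : h b = 0) (ha' : deriv h a = 0) (hb' : deriv h b = 0) :
    ∫ x in a..b, h x * deriv (deriv (deriv (deriv h))) x
      = ∫ x in a..b, deriv (deriv h) x ^ 2 := by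
  have h1 : ContDiff ℝ 3 (deriv h) := hh.deriv'
  have h2 : ContDiff ℝ 2 (deriv (deriv h)) := h1.deriv'
  have h3 : ContDiff ℝ 1 (deriv (deriv (deriv h))) := h2.deriv'
  have hibp₁ := integral_mul_deriv_eq_deriv_mul
    (fun x _ => (hh.differentiable (by norm_num) x).hasDerivAt)
    (fun x _ => (h3.differentiable one_ne_zero x).hasDerivAt)
    (h1.continuous.intervalIntegrable a b) (h3.continuous_deriv le_rfl |>.intervalIntegrable a b)
  have hibp₂ := integral_mul_deriv_eq_deriv_mul
    (fun x _ => (h1.differentiable (by norm_num) x).hasDerivAt)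
    (fun x _ => (h2.differentiable (by norm_num) x).hasDerivAt)
    (h2.continuous.intervalIntegrable a b) (h3.continuous.intervalIntegrable a b)
  rw [hibp₁, ha, hb, hibp₂, ha', hb']
  simp only [zero_mul, sub_zero, zero_sub, neg_neg, sq]

theorem mul_nonneg_of_monotone {f : ℝ → ℝ} (hf : Monotone f) (hf0 : f 0 = 0) (x : ℝ) :
    0 ≤ x * f x := by
  rcases le_total 0 x with hx | hx
  · exact mul_nonneg hx (hf0 ▸ hf hx)
  · exact mul_nonneg_of_nonpos_of_nonpos hx (hf0 ▸ hf hx)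

theorem integral_sq_deriv_deriv_le_of_beam {f g h : ℝ → ℝ} (hf : Monotone f) (hf0 : f 0 = 0)
    (hh : ContDiff ℝ 4 h) {a b : ℝ} (hab : a ≤ b) (ha : h a = 0) (hb : h b = 0)
    (ha' : deriv h a = 0) (hb' : deriv h b = 0)
    (heq : ∀ y ∈ Icc a b, deriv (deriv (deriv (deriv h))) y + f (h y) = g y)
    {M : ℝ} (hM : ∀ y ∈ Icc a b, |g y| ≤ M) :
    ∫ x in a..b, deriv (deriv h) x ^ 2 ≤ M * ∫ x in a..b, |h x| := by
  have hpoint : ∀ y ∈ Icc a b, h y * deriv (deriv (deriv (deriv h))) y ≤ M * |h y| := by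
    intro y hy
    calc h y * deriv (deriv (deriv (deriv h))) y = h y * g y - h y * f (h y) := by
          rw [← heq y hy]; ring
      _ ≤ |h y| * |g y| := by
          linarith [mul_nonneg_of_monotone hf hf0 (h y), le_abs_self (h y * g y),
            abs_mul (h y) (g y)]
      _ ≤ M * |h y| := by rw [mul_comm]; exact mul_le_mul_of_nonneg_right (hM y hy) (abs_nonneg _)
  rw [← integral_mul_deriv4_eq_integral_sq_deriv_deriv hh ha hb ha' hb', ← integral_const_mul]
  have h4 : Continuous (deriv (deriv (deriv (deriv h)))) :=
    hh.deriv'.deriv'.deriv'.continuous_deriv le_rfl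
  exact integral_mono_on hab ((hh.continuous.mul h4).intervalIntegrable a b)
    (Continuous.intervalIntegrable (by fun_prop) a b) hpoint

theorem sqrt_le_sqrt_two_mul_of_le_mul_sqrt {A M : ℝ} (hA : 0 ≤ A) (hM : 0 ≤ M)
    (h : A ≤ M * (2 * √(A / 3))) : √A ≤ √2 * M := by
  have ht : √(A / 3) ^ 2 = A / 3 := Real.sq_sqrt (by positivity)
  have hA2 : A ≤ 2 * M ^ 2 := by
    nlinarith [Real.sqrt_nonneg (A / 3), sq_nonneg (2 * M - 3 * √(A / 3))]
  calc √A ≤ √(2 * M ^ 2) := Real.sqrt_le_sqrt hA2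
    _ = √2 * M := by rw [Real.sqrt_mul zero_le_two, Real.sqrt_sq hM]

/-- A priori bound for the clamped beam equation `h'''' + f(h) = g`:
`‖h''‖_{L²(-1,1)} ≤ √2 ‖g‖_{L^∞(-1,1)}`. -/
theorem stmt_12 (f : ℝ → ℝ) (hf : Monotone f) (hf0 : f 0 = 0)
    (g : ℝ → ℝ) (hg : ContinuousOn g (Set.Icc (-1 : ℝ) 1))
    (h : ℝ → ℝ) (hreg : ContDiff ℝ 4 h)
    (hb1 : h (-1) = 0) (hb2 : h 1 = 0)
    (hb3 : deriv h (-1) = 0) (hb4 : deriv h 1 = 0)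
    (heq : ∀ y ∈ Set.Icc (-1 : ℝ) 1,
      deriv (deriv (deriv (deriv h))) y + f (h y) = g y) :
    Real.sqrt (∫ y in (-1 : ℝ)..1, (deriv (deriv h) y) ^ 2)
      ≤ Real.sqrt 2 * sSup ((fun y => |g y|) '' Set.Icc (-1 : ℝ) 1) := by
  set A := ∫ y in (-1 : ℝ)..1, deriv (deriv h) y ^ 2
  set M := sSup ((fun y => |g y|) '' Icc (-1 : ℝ) 1)
  have hM : ∀ y ∈ Icc (-1 : ℝ) 1, |g y| ≤ M := fun y hy =>
    le_csSup (isCompact_Icc.image_of_continuousOn hg.abs).bddAbove ⟨y, hy, rfl⟩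
  have hM0 : 0 ≤ M := (abs_nonneg _).trans (hM 0 (by norm_num))
  have hA0 : 0 ≤ A := integral_nonneg (by norm_num) fun _ _ => sq_nonneg _
  have hsup : ∀ y ∈ Icc (-1 : ℝ) 1, |h y| ≤ √(A / 3) := fun y hy => Real.abs_le_sqrt <| by
    have := sq_le_integral_sq_deriv_deriv_of_clamped (hreg.of_le (by norm_num)) hb1 hb2 hb3 hb4 hy
    norm_num at this ⊢
    linarith
  have hL1 : ∫ y in (-1 : ℝ)..1, |h y| ≤ 2 * √(A / 3) :=
    calc ∫ y in (-1 : ℝ)..1, |h y| ≤ ∫ _ in (-1 : ℝ)..1, √(A / 3) :=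
          integral_mono_on (by norm_num) (hreg.continuous.abs.intervalIntegrable _ _)
            intervalIntegrable_const hsup
      _ = 2 * √(A / 3) := by rw [integral_const, smul_eq_mul]; norm_num
  refine sqrt_le_sqrt_two_mul_of_le_mul_sqrt hA0 hM0 ?_
  exact (integral_sq_deriv_deriv_le_of_beam hf hf0 hreg (by norm_num) hb1 hb2 hb3 hb4 heq hM).trans
    (mul_le_mul_of_nonneg_left hL1 hM0)
end

section
/- Let f : ℝ → ℝ be monotone nondecreasing, let g : [-1,1] → ℝ be continuous, and let h₁, h₂ : [-1,1] → ℝ be four times continuously differentiable functions, both satisfying h''''(y) + f(h(y)) = g(y) for all y ∈ [-1,1] together with the clamped boundary conditions h(±1) = 0, h'(±1) = 0. Then h₁ = h₂ on [-1,1]. -/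
open MeasureTheory intervalIntegral Set

private lemma contDiff_deriv_step {u : ℝ → ℝ} {n : WithTop ℕ∞} (h : ContDiff ℝ (n + 1) u) :
    ContDiff ℝ n (deriv u) := (contDiff_succ_iff_deriv.mp h).2.2

private lemma beam_aux (w : ℝ → ℝ) (hw : ContDiff ℝ 4 w)
    (hb1 : w (-1) = 0) (hb2 : w 1 = 0)
    (hb3 : deriv w (-1) = 0) (hb4 : deriv w 1 = 0)
    (hneg : ∀ y ∈ Set.Icc (-1:ℝ) 1, w y * deriv (deriv (deriv (deriv w))) y ≤ 0) :
    ∀ y ∈ Set.Icc (-1:ℝ) 1, w y = 0 := by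
  have c3 : ContDiff ℝ 3 (deriv w) := by
    have h4 : (4 : WithTop ℕ∞) = 3 + 1 := by norm_num
    rw [h4] at hw; exact contDiff_deriv_step hw
  have c2 : ContDiff ℝ 2 (deriv (deriv w)) := by
    have h3 : (3 : WithTop ℕ∞) = 2 + 1 := by norm_num
    rw [h3] at c3; exact contDiff_deriv_step c3
  have c1 : ContDiff ℝ 1 (deriv (deriv (deriv w))) := by
    have h2 : (2 : WithTop ℕ∞) = 1 + 1 := by norm_num
    rw [h2] at c2; exact contDiff_deriv_step c2
  have c0 : ContDiff ℝ 0 (deriv (deriv (deriv (deriv w)))) := by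
    have h1 : (1 : WithTop ℕ∞) = 0 + 1 := by norm_num
    rw [h1] at c1; exact contDiff_deriv_step c1
  have d0 : Differentiable ℝ w := hw.differentiable (by norm_num)
  have d1 : Differentiable ℝ (deriv w) := c3.differentiable (by norm_num)
  have d2 : Differentiable ℝ (deriv (deriv w)) := c2.differentiable (by norm_num)
  have d3 : Differentiable ℝ (deriv (deriv (deriv w))) := c1.differentiable (by norm_num)
  have cont4 : Continuous (deriv (deriv (deriv (deriv w)))) := c0.continuous
  -- integration by parts (twice)
  have ibp1 : ∫ x in (-1:ℝ)..1, w x * deriv (deriv (deriv (deriv w))) x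
      = - ∫ x in (-1:ℝ)..1, deriv w x * deriv (deriv (deriv w)) x := by
    rw [integral_mul_deriv_eq_deriv_mul (u := w) (v := deriv (deriv (deriv w)))
      (u' := deriv w) (v' := deriv (deriv (deriv (deriv w))))
      (fun x _ => (d0 x).hasDerivAt) (fun x _ => (d3 x).hasDerivAt)
      (c3.continuous.intervalIntegrable _ _) (cont4.intervalIntegrable _ _)]
    rw [hb1, hb2]; ring
  have ibp2 : ∫ x in (-1:ℝ)..1, deriv w x * deriv (deriv (deriv w)) x
      = - ∫ x in (-1:ℝ)..1, deriv (deriv w) x * deriv (deriv w) x := by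
    rw [integral_mul_deriv_eq_deriv_mul (u := deriv w) (v := deriv (deriv w))
      (u' := deriv (deriv w)) (v' := deriv (deriv (deriv w)))
      (fun x _ => (d1 x).hasDerivAt) (fun x _ => (d2 x).hasDerivAt)
      (c2.continuous.intervalIntegrable _ _) (c1.continuous.intervalIntegrable _ _)]
    rw [hb3, hb4]; ring
  have hle : ∫ x in (-1:ℝ)..1, w x * deriv (deriv (deriv (deriv w))) x ≤ 0 := by
    have hnn : 0 ≤ ∫ x in (-1:ℝ)..1, -(w x * deriv (deriv (deriv (deriv w))) x) :=
      intervalIntegral.integral_nonneg (by norm_num)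
        (fun u hu => neg_nonneg.mpr (hneg u hu))
    rw [intervalIntegral.integral_neg] at hnn
    linarith
  have izero : ∫ x in (-1:ℝ)..1, deriv (deriv w) x * deriv (deriv w) x = 0 := by
    have hge : 0 ≤ ∫ x in (-1:ℝ)..1, deriv (deriv w) x * deriv (deriv w) x :=
      intervalIntegral.integral_nonneg (by norm_num) (fun u _ => mul_self_nonneg _)
    have : ∫ x in (-1:ℝ)..1, w x * deriv (deriv (deriv (deriv w))) x
        = ∫ x in (-1:ℝ)..1, deriv (deriv w) x * deriv (deriv w) x := by
      rw [ibp1, ibp2]; ring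
    linarith
  -- deriv (deriv w) vanishes on Icc
  have hD2 : ∀ y ∈ Icc (-1:ℝ) 1, deriv (deriv w) y = 0 := by
    have hinterior : ∀ y ∈ Ioo (-1:ℝ) 1, deriv (deriv w) y = 0 := by
      by_contra hcon
      push_neg at hcon
      obtain ⟨x₀, hx₀, hne⟩ := hcon
      have hU : IsOpen ({x | deriv (deriv w) x ≠ 0} ∩ Ioo (-1:ℝ) 1) :=
        (isOpen_ne_fun c2.continuous continuous_const).inter isOpen_Ioo
      have hpos : 0 < volume ({x | deriv (deriv w) x ≠ 0} ∩ Ioo (-1:ℝ) 1) :=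
        hU.measure_pos volume ⟨x₀, hne, hx₀⟩
      have hsub : ({x | deriv (deriv w) x ≠ 0} ∩ Ioo (-1:ℝ) 1)
          ⊆ Function.support (fun x => deriv (deriv w) x * deriv (deriv w) x)
            ∩ Ioc (-1:ℝ) 1 := by
        rintro x ⟨hx1, hx2⟩
        exact ⟨mul_ne_zero hx1 hx1, Ioo_subset_Ioc_self hx2⟩
      have hposint : 0 < ∫ x in (-1:ℝ)..1, deriv (deriv w) x * deriv (deriv w) x := by
        refine (integral_pos_iff_support_of_nonneg_ae
          (Filter.Eventually.of_forall fun x => mul_self_nonneg _)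
          ((c2.continuous.mul c2.continuous).intervalIntegrable _ _)).mpr
          ⟨by norm_num, lt_of_lt_of_le hpos (measure_mono hsub)⟩
      rw [izero] at hposint
      exact lt_irrefl 0 hposint
    intro y hy
    have hcl : closure (Ioo (-1:ℝ) 1) = Icc (-1:ℝ) 1 := closure_Ioo (by norm_num)
    have heq : Set.EqOn (deriv (deriv w)) 0 (closure (Ioo (-1:ℝ) 1)) :=
      Set.EqOn.closure (fun x hx => hinterior x hx) c2.continuous continuous_const
    have := heq (by rw [hcl]; exact hy)
    simpa using this
  -- deriv w vanishes on Icc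
  have hD1 : ∀ y ∈ Icc (-1:ℝ) 1, deriv w y = 0 := by
    intro y hy
    have hc := constant_of_has_deriv_right_zero (f := deriv w) (a := -1) (b := 1)
      c3.continuous.continuousOn
      (fun x hx => by
        have h := (d1 x).hasDerivAt
        rw [hD2 x (Ico_subset_Icc_self hx)] at h
        exact h.hasDerivWithinAt) y hy
    rw [hc, hb3]
  -- w vanishes on Icc
  intro y hy
  have hc := constant_of_has_deriv_right_zero (f := w) (a := -1) (b := 1)
    hw.continuous.continuousOn
    (fun x hx => by
      have h := (d0 x).hasDerivAt
      rw [hD1 x (Ico_subset_Icc_self hx)] at h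
      exact h.hasDerivWithinAt) y hy
  rw [hc, hb1]


/-- Uniqueness for the clamped beam equation `h'''' + f(h) = g` with `f` monotone
nondecreasing: two solutions coincide on `[-1,1]`. -/
theorem stmt_13 (f : ℝ → ℝ) (hf : Monotone f)
    (g : ℝ → ℝ) (hg : ContinuousOn g (Set.Icc (-1 : ℝ) 1))
    (h₁ h₂ : ℝ → ℝ) (hreg1 : ContDiff ℝ 4 h₁) (hreg2 : ContDiff ℝ 4 h₂)
    (hb11 : h₁ (-1) = 0) (hb12 : h₁ 1 = 0)
    (hb13 : deriv h₁ (-1) = 0) (hb14 : deriv h₁ 1 = 0)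
    (hb21 : h₂ (-1) = 0) (hb22 : h₂ 1 = 0)
    (hb23 : deriv h₂ (-1) = 0) (hb24 : deriv h₂ 1 = 0)
    (heq1 : ∀ y ∈ Set.Icc (-1 : ℝ) 1,
      deriv (deriv (deriv (deriv h₁))) y + f (h₁ y) = g y)
    (heq2 : ∀ y ∈ Set.Icc (-1 : ℝ) 1,
      deriv (deriv (deriv (deriv h₂))) y + f (h₂ y) = g y) :
    Set.EqOn h₁ h₂ (Set.Icc (-1 : ℝ) 1) := by
  have h4 : (4 : WithTop ℕ∞) = 3 + 1 := by norm_num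
  have h3 : (3 : WithTop ℕ∞) = 2 + 1 := by norm_num
  have h2 : (2 : WithTop ℕ∞) = 1 + 1 := by norm_num
  -- differentiability of iterated derivatives of h₁, h₂
  have c31 : ContDiff ℝ 3 (deriv h₁) := by
    have := hreg1; rw [h4] at this; exact contDiff_deriv_step this
  have c21 : ContDiff ℝ 2 (deriv (deriv h₁)) := by
    have := c31; rw [h3] at this; exact contDiff_deriv_step this
  have c11 : ContDiff ℝ 1 (deriv (deriv (deriv h₁))) := by
    have := c21; rw [h2] at this; exact contDiff_deriv_step this
  have c32 : ContDiff ℝ 3 (deriv h₂) := by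
    have := hreg2; rw [h4] at this; exact contDiff_deriv_step this
  have c22 : ContDiff ℝ 2 (deriv (deriv h₂)) := by
    have := c32; rw [h3] at this; exact contDiff_deriv_step this
  have c12 : ContDiff ℝ 1 (deriv (deriv (deriv h₂))) := by
    have := c22; rw [h2] at this; exact contDiff_deriv_step this
  have d01 : Differentiable ℝ h₁ := hreg1.differentiable (by norm_num)
  have d11 : Differentiable ℝ (deriv h₁) := c31.differentiable (by norm_num)
  have d21 : Differentiable ℝ (deriv (deriv h₁)) := c21.differentiable (by norm_num)
  have d31 : Differentiable ℝ (deriv (deriv (deriv h₁))) := c11.differentiable (by norm_num)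
  have d02 : Differentiable ℝ h₂ := hreg2.differentiable (by norm_num)
  have d12 : Differentiable ℝ (deriv h₂) := c32.differentiable (by norm_num)
  have d22 : Differentiable ℝ (deriv (deriv h₂)) := c22.differentiable (by norm_num)
  have d32 : Differentiable ℝ (deriv (deriv (deriv h₂))) := c12.differentiable (by norm_num)
  set w : ℝ → ℝ := fun x => h₁ x - h₂ x with hwdef
  have hw : ContDiff ℝ 4 w := hreg1.sub hreg2
  have e1 : deriv w = fun x => deriv h₁ x - deriv h₂ x :=
    funext fun x => deriv_sub (d01 x) (d02 x)
  have e2 : deriv (deriv w) = fun x => deriv (deriv h₁) x - deriv (deriv h₂) x := by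
    rw [e1]; exact funext fun x => deriv_sub (d11 x) (d12 x)
  have e3 : deriv (deriv (deriv w))
      = fun x => deriv (deriv (deriv h₁)) x - deriv (deriv (deriv h₂)) x := by
    rw [e2]; exact funext fun x => deriv_sub (d21 x) (d22 x)
  have e4 : deriv (deriv (deriv (deriv w)))
      = fun x => deriv (deriv (deriv (deriv h₁))) x - deriv (deriv (deriv (deriv h₂))) x := by
    rw [e3]; exact funext fun x => deriv_sub (d31 x) (d32 x)
  have hneg : ∀ y ∈ Set.Icc (-1:ℝ) 1, w y * deriv (deriv (deriv (deriv w))) y ≤ 0 := by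
    intro y hy
    have h1' := heq1 y hy
    have h2' := heq2 y hy
    rw [e4]
    simp only [hwdef]
    rcases le_total (h₁ y) (h₂ y) with hc | hc
    · have := hf hc; nlinarith
    · have := hf hc; nlinarith
  have hres := beam_aux w hw (by simp [hwdef, hb11, hb21]) (by simp [hwdef, hb12, hb22])
    (by rw [e1]; simp [hb13, hb23]) (by rw [e1]; simp [hb14, hb24]) hneg
  intro y hy
  have := hres y hy
  simpa [hwdef, sub_eq_zero] using this
end

section
/- Let f : ℝ → ℝ be monotone nondecreasing, let g₁, g₂ : [-1,1] → ℝ be continuous, and for i = 1,2 let hᵢ : [-1,1] → ℝ be four times continuously differentiable with clamped boundary conditions hᵢ(±1) = 0, hᵢ'(±1) = 0, satisfying hᵢ''''(y) + f(hᵢ(y)) = gᵢ(y) for all y ∈ [-1,1]. Then (∫_{-1}^{1} (h₁''(y) - h₂''(y))² dy)^{1/2} ≤ √2 · sup_{y ∈ [-1,1]} |g₁(y) - g₂(y)|. -/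
open MeasureTheory intervalIntegral

/-- Cauchy–Schwarz for interval integrals of continuous functions (squared form). -/
private lemma my_cs_sq (a b : ℝ) (hab : a ≤ b) (u v : ℝ → ℝ) (hu : Continuous u)
    (hv : Continuous v) :
    (∫ x in a..b, u x * v x) ^ 2 ≤
      (∫ x in a..b, (u x) ^ 2) * (∫ x in a..b, (v x) ^ 2) := by
  set A := ∫ x in a..b, (u x) ^ 2 with hA
  set B := ∫ x in a..b, (v x) ^ 2 with hB
  set C := ∫ x in a..b, u x * v x with hC
  have key : ∀ t : ℝ, 0 ≤ A * (t * t) + (2 * C) * t + B := by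
    intro t
    have i1 : IntervalIntegrable (fun x => t ^ 2 * (u x) ^ 2) volume a b :=
      Continuous.intervalIntegrable (by fun_prop) _ _
    have i2 : IntervalIntegrable (fun x => (2 * t) * (u x * v x)) volume a b :=
      Continuous.intervalIntegrable (by fun_prop) _ _
    have i3 : IntervalIntegrable (fun x => (v x) ^ 2) volume a b :=
      Continuous.intervalIntegrable (by fun_prop) _ _
    have h2 : (0:ℝ) ≤ ∫ x in a..b, (t * u x + v x) ^ 2 :=
      intervalIntegral.integral_nonneg hab (fun x _ => sq_nonneg _)
    calc (0:ℝ) ≤ ∫ x in a..b, (t * u x + v x) ^ 2 := h2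
      _ = ∫ x in a..b, (t ^ 2 * (u x) ^ 2 + (2 * t) * (u x * v x) + (v x) ^ 2) := by
          congr 1; funext x; ring
      _ = t ^ 2 * A + (2 * t) * C + B := by
          rw [intervalIntegral.integral_add (i1.add i2) i3,
            intervalIntegral.integral_add i1 i2,
            intervalIntegral.integral_const_mul, intervalIntegral.integral_const_mul]
      _ = A * (t * t) + (2 * C) * t + B := by ring
  have hd := discrim_le_zero key
  rw [discrim] at hd
  nlinarith [hd]

/-- Cauchy–Schwarz for interval integrals of continuous functions. -/
private lemma my_cs (a b : ℝ) (hab : a ≤ b) (u v : ℝ → ℝ) (hu : Continuous u)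
    (hv : Continuous v) :
    (∫ x in a..b, u x * v x) ≤
      Real.sqrt (∫ x in a..b, (u x) ^ 2) * Real.sqrt (∫ x in a..b, (v x) ^ 2) := by
  have h := my_cs_sq a b hab u v hu hv
  have hA : 0 ≤ ∫ x in a..b, (u x) ^ 2 :=
    intervalIntegral.integral_nonneg hab fun x _ => sq_nonneg _
  calc (∫ x in a..b, u x * v x) ≤ |∫ x in a..b, u x * v x| := le_abs_self _
    _ = Real.sqrt ((∫ x in a..b, u x * v x) ^ 2) := (Real.sqrt_sq_eq_abs _).symm
    _ ≤ Real.sqrt ((∫ x in a..b, (u x) ^ 2) * (∫ x in a..b, (v x) ^ 2)) :=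
        Real.sqrt_le_sqrt h
    _ = _ := Real.sqrt_mul hA _

/-- Poincaré inequality with constant 1 on `[-1,1]` for functions vanishing at both
endpoints. -/
private lemma my_poincare (u u' : ℝ → ℝ) (hd : ∀ y, HasDerivAt u (u' y) y)
    (hu' : Continuous u') (h0 : u (-1) = 0) (h1 : u 1 = 0) :
    (∫ y in (-1:ℝ)..1, (u y) ^ 2) ≤ ∫ y in (-1:ℝ)..1, (u' y) ^ 2 := by
  have hu : Continuous u := Differentiable.continuous (fun y => (hd y).differentiableAt)
  set A := ∫ y in (-1:ℝ)..1, (u' y) ^ 2 with hAdef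
  have isq : ∀ c d : ℝ, IntervalIntegrable (fun t => (u' t) ^ 2) volume c d :=
    fun c d => Continuous.intervalIntegrable (by fun_prop) c d
  have iusq : ∀ c d : ℝ, IntervalIntegrable (fun t => (u t) ^ 2) volume c d :=
    fun c d => Continuous.intervalIntegrable (by fun_prop) c d
  have hpartL : ∀ y : ℝ, -1 ≤ y → y ≤ 1 → (∫ t in (-1:ℝ)..y, (u' t) ^ 2) ≤ A := by
    intro y hy1 hy2
    have hsplit : (∫ t in (-1:ℝ)..y, (u' t) ^ 2) + (∫ t in y..(1:ℝ), (u' t) ^ 2) = A :=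
      intervalIntegral.integral_add_adjacent_intervals (isq _ _) (isq _ _)
    have : 0 ≤ ∫ t in y..(1:ℝ), (u' t) ^ 2 :=
      intervalIntegral.integral_nonneg hy2 fun x _ => sq_nonneg _
    linarith
  have hpartR : ∀ y : ℝ, -1 ≤ y → y ≤ 1 → (∫ t in y..(1:ℝ), (u' t) ^ 2) ≤ A := by
    intro y hy1 hy2
    have hsplit : (∫ t in (-1:ℝ)..y, (u' t) ^ 2) + (∫ t in y..(1:ℝ), (u' t) ^ 2) = A :=
      intervalIntegral.integral_add_adjacent_intervals (isq _ _) (isq _ _)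
    have : 0 ≤ ∫ t in (-1:ℝ)..y, (u' t) ^ 2 :=
      intervalIntegral.integral_nonneg hy1 fun x _ => sq_nonneg _
    linarith
  have key1 : ∀ y ∈ Set.Icc (-1:ℝ) 0, (u y) ^ 2 ≤ (1 + y) * A := by
    rintro y ⟨hy1, hy2⟩
    have ftc : ∫ t in (-1:ℝ)..y, u' t = u y - u (-1) :=
      intervalIntegral.integral_eq_sub_of_hasDerivAt (fun t _ => hd t)
        (hu'.intervalIntegrable _ _)
    have huy : u y = ∫ t in (-1:ℝ)..y, (1:ℝ) * u' t := by
      simp only [one_mul]; rw [ftc, h0]; ring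
    have hcs := my_cs_sq (-1) y (by linarith) (fun _ => (1:ℝ)) u' continuous_const hu'
    have h11 : (∫ t in (-1:ℝ)..y, ((1:ℝ)) ^ 2) = 1 + y := by simp; ring
    calc (u y) ^ 2 = (∫ t in (-1:ℝ)..y, (1:ℝ) * u' t) ^ 2 := by rw [huy]
      _ ≤ (∫ t in (-1:ℝ)..y, ((1:ℝ)) ^ 2) * (∫ t in (-1:ℝ)..y, (u' t) ^ 2) := hcs
      _ = (1 + y) * (∫ t in (-1:ℝ)..y, (u' t) ^ 2) := by rw [h11]
      _ ≤ (1 + y) * A := by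
          have := hpartL y hy1 (by linarith)
          have h1y : (0:ℝ) ≤ 1 + y := by linarith
          exact mul_le_mul_of_nonneg_left this h1y
  have key2 : ∀ y ∈ Set.Icc (0:ℝ) 1, (u y) ^ 2 ≤ (1 - y) * A := by
    rintro y ⟨hy1, hy2⟩
    have ftc : ∫ t in y..(1:ℝ), u' t = u 1 - u y :=
      intervalIntegral.integral_eq_sub_of_hasDerivAt (fun t _ => hd t)
        (hu'.intervalIntegrable _ _)
    have huy : (u y) ^ 2 = (∫ t in y..(1:ℝ), (1:ℝ) * u' t) ^ 2 := by
      simp only [one_mul]; rw [ftc, h1]; ring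
    have hcs := my_cs_sq y 1 (by linarith) (fun _ => (1:ℝ)) u' continuous_const hu'
    have h11 : (∫ t in y..(1:ℝ), ((1:ℝ)) ^ 2) = 1 - y := by simp
    calc (u y) ^ 2 = (∫ t in y..(1:ℝ), (1:ℝ) * u' t) ^ 2 := huy
      _ ≤ (∫ t in y..(1:ℝ), ((1:ℝ)) ^ 2) * (∫ t in y..(1:ℝ), (u' t) ^ 2) := hcs
      _ = (1 - y) * (∫ t in y..(1:ℝ), (u' t) ^ 2) := by rw [h11]
      _ ≤ (1 - y) * A := by
          have := hpartR y (by linarith) hy2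
          have h1y : (0:ℝ) ≤ 1 - y := by linarith
          exact mul_le_mul_of_nonneg_left this h1y
  have hsplit : (∫ y in (-1:ℝ)..1, (u y) ^ 2)
      = (∫ y in (-1:ℝ)..0, (u y) ^ 2) + ∫ y in (0:ℝ)..1, (u y) ^ 2 :=
    (intervalIntegral.integral_add_adjacent_intervals (iusq _ _) (iusq _ _)).symm
  have hb1 : (∫ y in (-1:ℝ)..0, (u y) ^ 2) ≤ ∫ y in (-1:ℝ)..0, (1 + y) * A := by
    apply intervalIntegral.integral_mono_on (by norm_num) (iusq _ _)
      (Continuous.intervalIntegrable (by fun_prop) _ _)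
    exact key1
  have hb2 : (∫ y in (0:ℝ)..1, (u y) ^ 2) ≤ ∫ y in (0:ℝ)..1, (1 - y) * A := by
    apply intervalIntegral.integral_mono_on (by norm_num) (iusq _ _)
      (Continuous.intervalIntegrable (by fun_prop) _ _)
    exact key2
  have hc1 : (∫ y in (-1:ℝ)..0, (1 + y) * A) = A / 2 := by
    rw [intervalIntegral.integral_mul_const]
    have : (∫ y in (-1:ℝ)..0, (1 + y)) = 1 / 2 := by
      rw [intervalIntegral.integral_add intervalIntegrable_const intervalIntegrable_id]
      simp [integral_id]
      norm_num
    rw [this]; ring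
  have hc2 : (∫ y in (0:ℝ)..1, (1 - y) * A) = A / 2 := by
    rw [intervalIntegral.integral_mul_const]
    have : (∫ y in (0:ℝ)..1, (1 - y)) = 1 / 2 := by
      rw [intervalIntegral.integral_sub intervalIntegrable_const intervalIntegrable_id]
      simp [integral_id]
      norm_num
    rw [this]; ring
  rw [hsplit]
  calc (∫ y in (-1:ℝ)..0, (u y) ^ 2) + ∫ y in (0:ℝ)..1, (u y) ^ 2
      ≤ (∫ y in (-1:ℝ)..0, (1 + y) * A) + ∫ y in (0:ℝ)..1, (1 - y) * A := by
        exact add_le_add hb1 hb2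
    _ = A := by rw [hc1, hc2]; ring

/-- Stability estimate for the clamped beam equation: if `hᵢ'''' + f(hᵢ) = gᵢ`
with clamped boundary conditions, then
`‖h₁'' - h₂''‖_{L²(-1,1)} ≤ √2 ‖g₁ - g₂‖_{L^∞(-1,1)}`. -/
theorem stmt_15 (f : ℝ → ℝ) (hf : Monotone f)
    (g₁ g₂ : ℝ → ℝ)
    (hg1 : ContinuousOn g₁ (Set.Icc (-1 : ℝ) 1))
    (hg2 : ContinuousOn g₂ (Set.Icc (-1 : ℝ) 1))
    (h₁ h₂ : ℝ → ℝ) (hreg1 : ContDiff ℝ 4 h₁) (hreg2 : ContDiff ℝ 4 h₂)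
    (hb11 : h₁ (-1) = 0) (hb12 : h₁ 1 = 0)
    (hb13 : deriv h₁ (-1) = 0) (hb14 : deriv h₁ 1 = 0)
    (hb21 : h₂ (-1) = 0) (hb22 : h₂ 1 = 0)
    (hb23 : deriv h₂ (-1) = 0) (hb24 : deriv h₂ 1 = 0)
    (heq1 : ∀ y ∈ Set.Icc (-1 : ℝ) 1,
      deriv (deriv (deriv (deriv h₁))) y + f (h₁ y) = g₁ y)
    (heq2 : ∀ y ∈ Set.Icc (-1 : ℝ) 1,
      deriv (deriv (deriv (deriv h₂))) y + f (h₂ y) = g₂ y) :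
    Real.sqrt (∫ y in (-1 : ℝ)..1, (deriv (deriv h₁) y - deriv (deriv h₂) y) ^ 2)
      ≤ Real.sqrt 2 * sSup ((fun y => |g₁ y - g₂ y|) '' Set.Icc (-1 : ℝ) 1) := by
  -- regularity ladders
  have L1 : ∀ h : ℝ → ℝ, ContDiff ℝ 4 h →
      Differentiable ℝ h ∧ Differentiable ℝ (deriv h) ∧
      Differentiable ℝ (deriv (deriv h)) ∧ Differentiable ℝ (deriv (deriv (deriv h))) ∧
      Continuous (deriv (deriv (deriv (deriv h)))) := by
    intro h hh
    have c3 : ContDiff ℝ 3 (deriv h) :=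
      (contDiff_succ_iff_deriv.mp (show ContDiff ℝ (3+1) h by norm_num [hh])).2.2
    have c2 : ContDiff ℝ 2 (deriv (deriv h)) :=
      (contDiff_succ_iff_deriv.mp (show ContDiff ℝ (2+1) (deriv h) by norm_num [c3])).2.2
    have c1 : ContDiff ℝ 1 (deriv (deriv (deriv h))) :=
      (contDiff_succ_iff_deriv.mp
        (show ContDiff ℝ (1+1) (deriv (deriv h)) by norm_num [c2])).2.2
    refine ⟨hh.differentiable (by norm_num), c3.differentiable (by norm_num),
      c2.differentiable (by norm_num), c1.differentiable (by norm_num), ?_⟩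
    exact (contDiff_one_iff_deriv.mp c1).2
  obtain ⟨d10, d11, d12, d13, d14⟩ := L1 h₁ hreg1
  obtain ⟨d20, d21, d22, d23, d24⟩ := L1 h₂ hreg2
  -- the difference and its derivatives
  set w : ℝ → ℝ := fun y => h₁ y - h₂ y with hw
  set w1 : ℝ → ℝ := fun y => deriv h₁ y - deriv h₂ y with hw1
  set w2 : ℝ → ℝ := fun y => deriv (deriv h₁) y - deriv (deriv h₂) y with hw2
  set w3 : ℝ → ℝ := fun y => deriv (deriv (deriv h₁)) y - deriv (deriv (deriv h₂)) y with hw3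
  set w4 : ℝ → ℝ := fun y =>
    deriv (deriv (deriv (deriv h₁))) y - deriv (deriv (deriv (deriv h₂))) y with hw4
  have hdw : ∀ y, HasDerivAt w (w1 y) y :=
    fun y => ((d10 y).hasDerivAt).sub ((d20 y).hasDerivAt)
  have hdw1 : ∀ y, HasDerivAt w1 (w2 y) y :=
    fun y => ((d11 y).hasDerivAt).sub ((d21 y).hasDerivAt)
  have hdw2 : ∀ y, HasDerivAt w2 (w3 y) y :=
    fun y => ((d12 y).hasDerivAt).sub ((d22 y).hasDerivAt)
  have hdw3 : ∀ y, HasDerivAt w3 (w4 y) y :=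
    fun y => ((d13 y).hasDerivAt).sub ((d23 y).hasDerivAt)
  have cw : Continuous w := Differentiable.continuous (fun y => (hdw y).differentiableAt)
  have cw1 : Continuous w1 := Differentiable.continuous (fun y => (hdw1 y).differentiableAt)
  have cw2 : Continuous w2 := Differentiable.continuous (fun y => (hdw2 y).differentiableAt)
  have cw3 : Continuous w3 := Differentiable.continuous (fun y => (hdw3 y).differentiableAt)
  have cw4 : Continuous w4 := d14.sub d24
  have wb1 : w (-1) = 0 := by simp [hw, hb11, hb21]
  have wb2 : w 1 = 0 := by simp [hw, hb12, hb22]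
  have wb3 : w1 (-1) = 0 := by simp [hw1, hb13, hb23]
  have wb4 : w1 1 = 0 := by simp [hw1, hb14, hb24]
  -- integration by parts (twice)
  have ibp1 : (∫ y in (-1:ℝ)..1, w y * w4 y)
      = w 1 * w3 1 - w (-1) * w3 (-1) - ∫ y in (-1:ℝ)..1, w1 y * w3 y :=
    intervalIntegral.integral_mul_deriv_eq_deriv_mul
      (fun x _ => hdw x) (fun x _ => hdw3 x)
      (cw1.intervalIntegrable _ _) (cw4.intervalIntegrable _ _)
  have ibp2 : (∫ y in (-1:ℝ)..1, w1 y * w3 y)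
      = w1 1 * w2 1 - w1 (-1) * w2 (-1) - ∫ y in (-1:ℝ)..1, w2 y * w2 y :=
    intervalIntegral.integral_mul_deriv_eq_deriv_mul
      (fun x _ => hdw1 x) (fun x _ => hdw2 x)
      (cw2.intervalIntegrable _ _) (cw3.intervalIntegrable _ _)
  have ibp : (∫ y in (-1:ℝ)..1, w y * w4 y) = ∫ y in (-1:ℝ)..1, (w2 y) ^ 2 := by
    rw [ibp1, ibp2, wb1, wb2, wb3, wb4]
    simp only [zero_mul, mul_zero]
    rw [show (∫ y in (-1:ℝ)..1, w2 y * w2 y) = ∫ y in (-1:ℝ)..1, (w2 y) ^ 2 by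
      congr 1; funext y; ring]
    ring
  -- the sup bound
  set M := sSup ((fun y => |g₁ y - g₂ y|) '' Set.Icc (-1 : ℝ) 1) with hM
  have hbdd : BddAbove ((fun y => |g₁ y - g₂ y|) '' Set.Icc (-1 : ℝ) 1) :=
    (isCompact_Icc.image_of_continuousOn ((hg1.sub hg2).abs)).bddAbove
  have hMub : ∀ y ∈ Set.Icc (-1:ℝ) 1, |g₁ y - g₂ y| ≤ M :=
    fun y hy => le_csSup hbdd ⟨y, hy, rfl⟩
  have hM0 : 0 ≤ M := le_trans (abs_nonneg _) (hMub 0 (by norm_num))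
  -- pointwise bound on w * w4 on the interval
  have hpt : ∀ y ∈ Set.Icc (-1:ℝ) 1, w y * w4 y ≤ M * |w y| := by
    intro y hy
    have he1 := heq1 y hy
    have he2 := heq2 y hy
    have hw4y : w4 y = (g₁ y - g₂ y) - (f (h₁ y) - f (h₂ y)) := by
      simp only [hw4]; linarith
    have hmono : 0 ≤ (f (h₁ y) - f (h₂ y)) * w y := by
      rcases le_total (h₁ y) (h₂ y) with hle | hle
      · have := hf hle
        have hwy : w y ≤ 0 := by simp only [hw]; linarith
        nlinarith
      · have := hf hle
        have hwy : 0 ≤ w y := by simp only [hw]; linarith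
        exact mul_nonneg (by linarith) hwy
    have habs : (g₁ y - g₂ y) * w y ≤ M * |w y| := by
      calc (g₁ y - g₂ y) * w y ≤ |(g₁ y - g₂ y) * w y| := le_abs_self _
        _ = |g₁ y - g₂ y| * |w y| := abs_mul _ _
        _ ≤ M * |w y| := mul_le_mul_of_nonneg_right (hMub y hy) (abs_nonneg _)
    calc w y * w4 y = (g₁ y - g₂ y) * w y - (f (h₁ y) - f (h₂ y)) * w y := by
          rw [hw4y]; ring
      _ ≤ (g₁ y - g₂ y) * w y := by linarith
      _ ≤ M * |w y| := habs
  -- main integral chain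
  set B0 := ∫ y in (-1:ℝ)..1, (w y) ^ 2 with hB0
  set B1 := ∫ y in (-1:ℝ)..1, (w1 y) ^ 2 with hB1
  set B2 := ∫ y in (-1:ℝ)..1, (w2 y) ^ 2 with hB2
  have hB0nn : 0 ≤ B0 := intervalIntegral.integral_nonneg (by norm_num) fun x _ => sq_nonneg _
  have hB2nn : 0 ≤ B2 := intervalIntegral.integral_nonneg (by norm_num) fun x _ => sq_nonneg _
  have hP0 : B0 ≤ B1 := my_poincare w w1 hdw cw1 wb1 wb2
  have hP1 : B1 ≤ B2 := my_poincare w1 w2 hdw1 cw2 wb3 wb4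
  have step1 : B2 ≤ ∫ y in (-1:ℝ)..1, M * |w y| := by
    rw [← ibp]
    exact intervalIntegral.integral_mono_on (by norm_num)
      (Continuous.intervalIntegrable (by fun_prop) _ _)
      (Continuous.intervalIntegrable (by fun_prop) _ _) hpt
  have step2 : (∫ y in (-1:ℝ)..1, M * |w y|) = M * ∫ y in (-1:ℝ)..1, |w y| :=
    intervalIntegral.integral_const_mul _ _
  have step3 : (∫ y in (-1:ℝ)..1, |w y|) ≤ Real.sqrt 2 * Real.sqrt B0 := by
    have hcs := my_cs (-1) 1 (by norm_num) (fun _ => (1:ℝ)) (fun y => |w y|)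
      continuous_const cw.abs
    have e1 : (∫ x in (-1:ℝ)..1, (1:ℝ) * |w x|) = ∫ y in (-1:ℝ)..1, |w y| := by
      simp
    have e2 : (∫ x in (-1:ℝ)..1, ((1:ℝ)) ^ 2) = 2 := by simp; norm_num
    have e3 : (∫ x in (-1:ℝ)..1, (|w x|) ^ 2) = B0 := by
      rw [hB0]; congr 1; funext x; rw [sq_abs]
    rw [e1, e2, e3] at hcs
    exact hcs
  have main : B2 ≤ Real.sqrt 2 * M * Real.sqrt B2 := by
    have hsq : Real.sqrt B0 ≤ Real.sqrt B2 := Real.sqrt_le_sqrt (by linarith)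
    calc B2 ≤ M * ∫ y in (-1:ℝ)..1, |w y| := by rw [← step2]; exact step1
      _ ≤ M * (Real.sqrt 2 * Real.sqrt B0) :=
          mul_le_mul_of_nonneg_left step3 hM0
      _ ≤ M * (Real.sqrt 2 * Real.sqrt B2) := by
          have : Real.sqrt 2 * Real.sqrt B0 ≤ Real.sqrt 2 * Real.sqrt B2 :=
            mul_le_mul_of_nonneg_left hsq (Real.sqrt_nonneg _)
          exact mul_le_mul_of_nonneg_left this hM0
      _ = Real.sqrt 2 * M * Real.sqrt B2 := by ring
  -- conclude
  have goal : Real.sqrt B2 ≤ Real.sqrt 2 * M := by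
    rcases eq_or_lt_of_le (Real.sqrt_nonneg B2) with h | h
    · rw [← h]
      positivity
    · have hmul : Real.sqrt B2 * Real.sqrt B2 ≤ (Real.sqrt 2 * M) * Real.sqrt B2 := by
        rw [Real.mul_self_sqrt hB2nn]
        exact main
      exact le_of_mul_le_mul_right hmul h
  exact goal
end
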